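/- arXiv:2201.06266 — 10 statements merged into one kernel-verified Lean document; each statement's English description precedes it below -/
import Mathlib

section
/- Let h : (L, S) → (M, T) be a morphism of Frith frames. Then there exists a morphism of Frith frames g : (M, T) → (L, S) with g ∘ h = id_L and h ∘ g = id_M if and only if h is injective and h[S] = T. -/
/-- `S` is a join-dense bounded sublattice of the frame `L`, i.e. `(L, S)` is a
Frith frame. -/
def IsFrith {L : Type*} [Order.Frame L] (S : Set L) : Prop :=
  ⊥ ∈ S ∧ ⊤ ∈ S ∧ (∀ a ∈ S, ∀ b ∈ S, a ⊓ b ∈ S) ∧ (∀ a ∈ S, ∀ b ∈ S, a ⊔ b ∈ S) ∧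
    ∀ a : L, ∃ u ⊆ S, a = sSup u

/-- A morphism of Frith frames `h : (L, S) → (M, T)` has a
two-sided inverse that is a morphism of Frith frames if and only if `h` is
injective and `h[S] = T`. -/
theorem frith_iso_iff {L M : Type*} [Order.Frame L] [Order.Frame M]
    (S : Set L) (T : Set M) (hS : IsFrith S) (hT : IsFrith T)
    (h : FrameHom L M) (hhom : ∀ s ∈ S, h s ∈ T) :
    (∃ g : FrameHom M L, (∀ t ∈ T, g t ∈ S) ∧
        (∀ a : L, g (h a) = a) ∧ (∀ b : M, h (g b) = b)) ↔
      (Function.Injective h ∧ (⇑h) '' S = T) := by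
  constructor
  · rintro ⟨g, hgS, hgh, hhg⟩
    refine ⟨Function.LeftInverse.injective hgh, ?_⟩
    apply Set.Subset.antisymm
    · rintro _ ⟨s, hs, rfl⟩; exact hhom s hs
    · intro t ht
      exact ⟨g t, hgS t ht, hhg t⟩
  · rintro ⟨hinj, himg⟩
    -- h is surjective
    have hsurj : Function.Surjective h := by
      intro b
      obtain ⟨u, huT, rfl⟩ := hT.2.2.2.2 b
      refine ⟨sSup ((⇑h) ⁻¹' u ∩ S), ?_⟩
      rw [map_sSup]
      congr 1
      apply Set.Subset.antisymm
      · rintro _ ⟨a, ⟨ha, _⟩, rfl⟩; exact ha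
      · intro t ht
        have : t ∈ T := huT ht
        rw [← himg] at this
        obtain ⟨s, hsS, rfl⟩ := this
        exact ⟨s, ⟨ht, hsS⟩, rfl⟩
    have hbij : Function.Bijective h := ⟨hinj, hsurj⟩
    -- order iso
    have hle : ∀ a b : L, h a ≤ h b ↔ a ≤ b := by
      intro a b
      constructor
      · intro hab
        have : h (a ⊓ b) = h a := by
          rw [map_inf]; exact inf_eq_left.mpr hab
        have := hinj this
        exact inf_eq_left.mp this
      · intro hab
        exact OrderHomClass.mono h hab
    let e : L ≃o M := ⟨Equiv.ofBijective h hbij, hle _ _⟩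
    let g : FrameHom M L :=
      { toFun := e.symm
        map_inf' := fun a b => e.symm.map_inf a b
        map_top' := e.symm.map_top
        map_sSup' := fun s => by
          show e.symm (sSup s) = sSup ((⇑e.symm) '' s)
          rw [e.symm.map_sSup]; simp [sSup_image] }
    have hgh : ∀ a : L, g (h a) = a := fun a => e.symm_apply_apply a
    have hhg : ∀ b : M, h (g b) = b := fun b => e.apply_symm_apply b
    refine ⟨g, ?_, hgh, hhg⟩
    intro t ht
    rw [← himg] at ht
    obtain ⟨s, hsS, rfl⟩ := ht
    rw [hgh]
    exact hsS
end

section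
/- Let e : (X, 𝒮) → (Y, 𝒯) be a morphism of Pervin spaces. Then e is an epimorphism in the category of Pervin spaces — that is, for every Pervin space (Z, 𝒰) and all morphisms of Pervin spaces f₁, f₂ : (Y, 𝒯) → (Z, 𝒰), f₁ ∘ e = f₂ ∘ e implies f₁ = f₂ — if and only if the function e : X → Y is surjective. -/
universe u

/-- `𝒮` is a bounded sublattice of the powerset of `X`, i.e. `(X, 𝒮)` is a
Pervin space. -/
def IsPervin {X : Type*} (𝒮 : Set (Set X)) : Prop :=
  ∅ ∈ 𝒮 ∧ Set.univ ∈ 𝒮 ∧ (∀ A ∈ 𝒮, ∀ B ∈ 𝒮, A ∪ B ∈ 𝒮) ∧ (∀ A ∈ 𝒮, ∀ B ∈ 𝒮, A ∩ B ∈ 𝒮)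

/-- `f` is a morphism of Pervin spaces `(X, 𝒮) → (Y, 𝒯)`: preimages of members
of `𝒯` belong to `𝒮`. -/
def IsPervinHom {X Y : Type*} (𝒮 : Set (Set X)) (𝒯 : Set (Set Y)) (f : X → Y) : Prop :=
  ∀ T ∈ 𝒯, f ⁻¹' T ∈ 𝒮

/-- A morphism of Pervin spaces `e : (X, 𝒮) → (Y, 𝒯)` is an
epimorphism (right-cancellable among morphisms of Pervin spaces) if and only if
the function `e : X → Y` is surjective. -/
theorem pervin_epi_iff_surjective {X Y : Type u} (𝒮 : Set (Set X)) (𝒯 : Set (Set Y))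
    (hS : IsPervin 𝒮) (hT : IsPervin 𝒯) (e : X → Y) (he : IsPervinHom 𝒮 𝒯 e) :
    (∀ (Z : Type u) (𝒰 : Set (Set Z)), IsPervin 𝒰 →
        ∀ f₁ f₂ : Y → Z, IsPervinHom 𝒯 𝒰 f₁ → IsPervinHom 𝒯 𝒰 f₂ →
          f₁ ∘ e = f₂ ∘ e → f₁ = f₂) ↔
      Function.Surjective e := by
  classical
  constructor
  · intro hepi
    by_contra hns
    rw [Function.Surjective] at hns
    push_neg at hns
    obtain ⟨y₀, hy₀⟩ := hns
    set Z := ULift.{u} Bool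
    set 𝒰 : Set (Set Z) := {∅, Set.univ}
    have hU : IsPervin 𝒰 := by
      refine ⟨Or.inl rfl, Or.inr rfl, ?_, ?_⟩ <;>
        rintro A (rfl | rfl) B (rfl | rfl) <;> simp [𝒰]
    set f₁ : Y → Z := fun _ => ⟨true⟩
    set f₂ : Y → Z := fun y => ⟨decide (∃ x, e x = y)⟩
    have htriv : ∀ f : Y → Z, IsPervinHom 𝒯 𝒰 f := by
      rintro f T (rfl | rfl)
      · simpa using hT.1
      · simpa using hT.2.1
    have heq : f₁ ∘ e = f₂ ∘ e := by
      funext x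
      simp [f₁, f₂]
    have := hepi Z 𝒰 hU f₁ f₂ (htriv f₁) (htriv f₂) heq
    have h2 : (true : Bool) = decide (∃ x, e x = y₀) :=
      congrArg ULift.down (congrFun this y₀)
    obtain ⟨x, hx⟩ := of_decide_eq_true h2.symm
    exact hy₀ x hx
  · intro hsurj Z 𝒰 hU f₁ f₂ h₁ h₂ heq
    funext y
    obtain ⟨x, rfl⟩ := hsurj y
    exact congrFun heq x
end

section
/- Let m : (X, 𝒮) → (Y, 𝒯) be a morphism of Pervin spaces. Then m is an extremal monomorphism in the category of Pervin spaces — that is, m is a monomorphism and whenever m = g ∘ e with e : (X, 𝒮) → (Z, 𝒰) an epimorphism of Pervin spaces and g : (Z, 𝒰) → (Y, 𝒯) a morphism of Pervin spaces, e is an isomorphism of Pervin spaces — if and only if the function m : X → Y is injective and every S ∈ 𝒮 is of the form m⁻¹(T) for some T ∈ 𝒯. -/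
universe u

/-- A morphism of Pervin spaces is a monomorphism: left-cancellable among
morphisms of Pervin spaces. -/
def PervinMono {X Y : Type u} (𝒮 : Set (Set X)) (𝒯 : Set (Set Y)) (m : X → Y) : Prop :=
  ∀ (W : Type u) (𝒱 : Set (Set W)), IsPervin 𝒱 →
    ∀ f g : W → X, IsPervinHom 𝒱 𝒮 f → IsPervinHom 𝒱 𝒮 g → m ∘ f = m ∘ g → f = g

/-- A morphism of Pervin spaces is an epimorphism: right-cancellable among
morphisms of Pervin spaces. -/
def PervinEpi {X Y : Type u} (𝒮 : Set (Set X)) (𝒯 : Set (Set Y)) (e : X → Y) : Prop :=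
  ∀ (W : Type u) (𝒱 : Set (Set W)), IsPervin 𝒱 →
    ∀ f g : Y → W, IsPervinHom 𝒯 𝒱 f → IsPervinHom 𝒯 𝒱 g → f ∘ e = g ∘ e → f = g

/-- A morphism of Pervin spaces is an isomorphism: it has a two-sided inverse
that is a morphism of Pervin spaces. -/
def PervinIso {X Y : Type u} (𝒮 : Set (Set X)) (𝒯 : Set (Set Y)) (f : X → Y) : Prop :=
  IsPervinHom 𝒮 𝒯 f ∧ ∃ g : Y → X, IsPervinHom 𝒯 𝒮 g ∧ g ∘ f = id ∧ f ∘ g = id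

/-- A morphism of Pervin spaces `m : (X, 𝒮) → (Y, 𝒯)` is an
extremal monomorphism (a monomorphism such that in any factorization
`m = g ∘ e` with `e` an epimorphism of Pervin spaces, `e` is an isomorphism) if
and only if `m` is injective and every `S ∈ 𝒮` is of the form `m⁻¹(T)` for some
`T ∈ 𝒯`. -/
theorem pervin_extremal_mono_iff {X Y : Type u} (𝒮 : Set (Set X)) (𝒯 : Set (Set Y))
    (hS : IsPervin 𝒮) (hT : IsPervin 𝒯) (m : X → Y) (hm : IsPervinHom 𝒮 𝒯 m) :
    (PervinMono 𝒮 𝒯 m ∧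
      ∀ (Z : Type u) (𝒰 : Set (Set Z)), IsPervin 𝒰 →
        ∀ (e : X → Z) (g : Z → Y), IsPervinHom 𝒮 𝒰 e → IsPervinHom 𝒰 𝒯 g →
          PervinEpi 𝒮 𝒰 e → m = g ∘ e → PervinIso 𝒮 𝒰 e) ↔
      (Function.Injective m ∧ ∀ S ∈ 𝒮, ∃ T ∈ 𝒯, m ⁻¹' T = S) := by
  classical
  constructor
  · rintro ⟨hmono, hext⟩
    constructor
    · -- injectivity from mono, using a point (PUnit) with full powerset
      intro x₁ x₂ hx
      have hP : IsPervin (Set.univ : Set (Set PUnit.{u+1})) := by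
        refine ⟨trivial, trivial, ?_, ?_⟩ <;> intros <;> trivial
      have := hmono PUnit.{u+1} Set.univ hP (fun _ => x₁) (fun _ => x₂)
        (fun _ _ => trivial) (fun _ _ => trivial)
        (by funext _; exact hx)
      exact congrFun this PUnit.unit
    · -- every S ∈ 𝒮 is a preimage, via the factorization through (X, preimage lattice)
      set 𝒰 : Set (Set X) := {S | ∃ T ∈ 𝒯, m ⁻¹' T = S} with h𝒰
      have hU : IsPervin 𝒰 := by
        obtain ⟨he, hu, hun, hin⟩ := hT
        refine ⟨⟨∅, he, rfl⟩, ⟨Set.univ, hu, rfl⟩, ?_, ?_⟩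
        · rintro A ⟨T₁, hT₁, rfl⟩ B ⟨T₂, hT₂, rfl⟩
          exact ⟨T₁ ∪ T₂, hun _ hT₁ _ hT₂, rfl⟩
        · rintro A ⟨T₁, hT₁, rfl⟩ B ⟨T₂, hT₂, rfl⟩
          exact ⟨T₁ ∩ T₂, hin _ hT₁ _ hT₂, rfl⟩
      have hiso : PervinIso 𝒮 𝒰 id := by
        refine hext X 𝒰 hU id m ?_ ?_ ?_ rfl
        · rintro S ⟨T, hTmem, rfl⟩; exact hm T hTmem
        · intro T hTmem; exact ⟨T, hTmem, rfl⟩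
        · intro W 𝒱 _ f g _ _ hfg; exact hfg
      obtain ⟨_, g', hg', hgi, _⟩ := hiso
      have hg'id : g' = id := hgi
      intro S hSmem
      have := hg' S hSmem
      rw [hg'id] at this
      exact this
  · rintro ⟨hinj, hpre⟩
    constructor
    · intro W 𝒱 _ f g _ _ hfg
      funext w
      exact hinj (congrFun hfg w)
    · intro Z 𝒰 hU e g he hg hepi hfact
      -- e is injective
      have einj : Function.Injective e := fun a b hab => by
        apply hinj; rw [hfact]; simp [Function.comp, hab]
      -- e is surjective, using the epi property with a two-point indiscrete space
      have esurj : Function.Surjective e := by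
        by_contra hns
        obtain ⟨z₀, hz₀⟩ : ∃ z, z ∉ Set.range e := by
          by_contra h
          push_neg at h
          exact hns fun z => h z
        have hV : IsPervin ({∅, Set.univ} : Set (Set (ULift.{u} Bool))) := by
          refine ⟨Or.inl rfl, Or.inr rfl, ?_, ?_⟩
          · rintro A (rfl | rfl) B (rfl | rfl) <;> simp
          · rintro A (rfl | rfl) B (rfl | rfl) <;> simp
        set f : Z → ULift.{u} Bool := fun z => ⟨z ∈ Set.range e⟩
        set g' : Z → ULift.{u} Bool := fun _ => ⟨true⟩
        have hf : IsPervinHom 𝒰 {∅, Set.univ} f := by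
          rintro V (rfl | rfl)
          · simpa using hU.1
          · simpa using hU.2.1
        have hg'' : IsPervinHom 𝒰 {∅, Set.univ} g' := by
          rintro V (rfl | rfl)
          · simpa using hU.1
          · simpa using hU.2.1
        have := hepi (ULift.{u} Bool) {∅, Set.univ} hV f g' hf hg''
          (by funext x; simp [f, g', Function.comp])
        have hz := congrFun this z₀
        simp only [f, g'] at hz
        have : z₀ ∈ Set.range e := by
          have := congrArg ULift.down hz
          simpa [decide_eq_true_iff] using this
        exact hz₀ this
      obtain ⟨e', he'l, he'r⟩ := Function.bijective_iff_has_inverse.mp ⟨einj, esurj⟩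
      refine ⟨he, e', ?_, funext he'l, funext he'r⟩
      intro S hSmem
      obtain ⟨T, hTmem, rfl⟩ := hpre S hSmem
      have : e' ⁻¹' (m ⁻¹' T) = g ⁻¹' T := by
        ext z
        simp only [Set.mem_preimage, hfact, Function.comp_apply, he'r z]
      rw [this]
      exact hg T hTmem
end

section
/- Let (X, 𝒮) and (Y, 𝒯) be Pervin spaces and m : (X, 𝒮) → (Y, 𝒯) a morphism of Pervin spaces. Suppose the topology Ω_𝒮(X) on X generated by 𝒮 is T₀ (for any two distinct points of X there is an open set of Ω_𝒮(X) containing exactly one of them), and suppose that for every S ∈ 𝒮 there exists T ∈ 𝒯 with m⁻¹(T) = S. Then the function m : X → Y is injective. -/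
/-- Let `m : (X, 𝒮) → (Y, 𝒯)` be a morphism of Pervin spaces.
If the topology on `X` generated by `𝒮` is `T₀`, and every `S ∈ 𝒮` is of the
form `m⁻¹(T)` for some `T ∈ 𝒯`, then `m` is injective. -/
theorem pervin_injective_of_T0 {X Y : Type*} (𝒮 : Set (Set X)) (𝒯 : Set (Set Y))
    (hS : IsPervin 𝒮) (hT : IsPervin 𝒯) (m : X → Y) (hm : IsPervinHom 𝒮 𝒯 m)
    (hT0 : ∀ x y : X, x ≠ y → ∃ U : Set X,
      (TopologicalSpace.generateFrom 𝒮).IsOpen U ∧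
        ((x ∈ U ∧ y ∉ U) ∨ (y ∈ U ∧ x ∉ U)))
    (hext : ∀ S ∈ 𝒮, ∃ T ∈ 𝒯, m ⁻¹' T = S) :
    Function.Injective m := by
  have key : ∀ U : Set X, (TopologicalSpace.generateFrom 𝒮).IsOpen U →
      ∀ x y : X, x ∈ U → y ∉ U → ∃ S ∈ 𝒮, x ∈ S ∧ y ∉ S := by
    intro U hU
    induction hU with
    | basic S hSmem => exact fun x y hx hy => ⟨S, hSmem, hx, hy⟩
    | univ => exact fun x y _ hy => absurd (Set.mem_univ y) hy
    | inter A B _ _ ihA ihB =>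
      intro x y hx hy
      rcases not_and_or.mp hy with h | h
      · exact ihA x y hx.1 h
      · exact ihB x y hx.2 h
    | sUnion 𝒰 _ ih =>
      intro x y hx hy
      rcases hx with ⟨t, ht, hxt⟩
      exact ih t ht x y hxt (fun hyt => hy ⟨t, ht, hyt⟩)
  intro x y hxy
  by_contra hne
  rcases hT0 x y hne with ⟨U, hUopen, h | h⟩
  · obtain ⟨S, hSmem, hxS, hyS⟩ := key U hUopen x y h.1 h.2
    obtain ⟨T, _, hTS⟩ := hext S hSmem
    rw [← hTS] at hxS hyS
    exact hyS (by simpa [Set.mem_preimage, ← hxy] using hxS)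
  · obtain ⟨S, hSmem, hyS, hxS⟩ := key U hUopen y x h.1 h.2
    obtain ⟨T, _, hTS⟩ := hext S hSmem
    rw [← hTS] at hxS hyS
    exact hxS (by simpa [Set.mem_preimage, hxy] using hyS)
end

section
/- Let (X, 𝒮) be a Pervin space, let Ω_𝒮(X) be the topology on X generated by 𝒮 (a frame under inclusion), and for each Y ⊆ X let θ_Y denote the frame congruence on Ω_𝒮(X) generated by the relation {(S₁, S₂) ∈ 𝒮 × 𝒮 | S₁ ∩ Y = S₂ ∩ Y}. Then the following are equivalent: (1) for every x ∈ X there exists S ∈ 𝒮 with x ∈ S and S ∖ {x} ∈ 𝒮 (i.e., (X,𝒮) is Pervin-T_D); (2) the assignment Y ↦ θ_Y is injective on subsets Y ⊆ X; (3) for no x ∈ X is θ_{X∖{x}} the identity relation on Ω_𝒮(X); (4) the topology on X generated by 𝒮 ∪ {X ∖ S | S ∈ 𝒮} (the Skula topology induced by (X,𝒮)) is the discrete topology. -/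
/-- A frame congruence on a frame `L`: an equivalence relation compatible with
binary meets and with suprema of arbitrary families (here presented via sets of
pairs). -/
def IsFrameCongruence {L : Type*} [Order.Frame L] (θ : L → L → Prop) : Prop :=
  Equivalence θ ∧
  (∀ a b c d : L, θ a b → θ c d → θ (a ⊓ c) (b ⊓ d)) ∧
  (∀ s : Set (L × L), (∀ p ∈ s, θ p.1 p.2) →
    θ (sSup (Prod.fst '' s)) (sSup (Prod.snd '' s)))

/-- The frame congruence generated by a relation `ρ`: the intersection of all
frame congruences containing `ρ`. -/
def frameCongGen {L : Type*} [Order.Frame L] (ρ : L → L → Prop) : L → L → Prop :=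
  fun a b => ∀ θ : L → L → Prop, IsFrameCongruence θ → (∀ x y, ρ x y → θ x y) → θ a b

theorem isFrameCongruence_eq {L : Type*} [Order.Frame L] :
    IsFrameCongruence (L := L) (· = ·) := by
  refine ⟨⟨fun _ => rfl, fun h => h.symm, fun h1 h2 => h1.trans h2⟩, ?_, ?_⟩
  · intro a b c d hab hcd; rw [show a = b from hab, show c = d from hcd]
  · intro s hs
    show sSup (Prod.fst '' s) = sSup (Prod.snd '' s)
    congr 1
    ext x
    simp only [Set.mem_image]
    constructor
    · rintro ⟨p, hp, rfl⟩; exact ⟨p, hp, (hs p hp).symm⟩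
    · rintro ⟨p, hp, rfl⟩; exact ⟨p, hp, hs p hp⟩

theorem isFrameCongruence_inter {X : Type*} [TopologicalSpace X] (Y : Set X) :
    IsFrameCongruence (fun U V : TopologicalSpace.Opens X =>
      (U : Set X) ∩ Y = (V : Set X) ∩ Y) := by
  refine ⟨⟨fun _ => rfl, fun h => h.symm, fun h1 h2 => h1.trans h2⟩, ?_, ?_⟩
  · intro a b c d hab hcd
    simp only [TopologicalSpace.Opens.coe_inf]
    rw [Set.inter_inter_distrib_right, hab, hcd, ← Set.inter_inter_distrib_right]
  · intro s hs
    simp only [TopologicalSpace.Opens.coe_sSup]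
    ext x
    simp only [Set.mem_inter_iff, Set.mem_iUnion, Set.mem_image, Prod.exists]
    constructor
    · rintro ⟨⟨U, ⟨a, b, hab, rfl⟩, hxU⟩, hxY⟩
      refine ⟨⟨b, ⟨a, b, hab, rfl⟩, ?_⟩, hxY⟩
      exact ((hs _ hab) ▸ (Set.mem_inter hxU hxY) : x ∈ (b : Set X) ∩ Y).1
    · rintro ⟨⟨U, ⟨a, b, hab, rfl⟩, hxU⟩, hxY⟩
      refine ⟨⟨a, ⟨a, b, hab, rfl⟩, ?_⟩, hxY⟩
      exact ((hs _ hab).symm ▸ (Set.mem_inter hxU hxY) : x ∈ (a : Set X) ∩ Y).1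

theorem frameCongGen_refl {L : Type*} [Order.Frame L] (ρ : L → L → Prop) (a : L) :
    frameCongGen ρ a a := fun _θ hθ _ => hθ.1.refl a

theorem frameCongGen_le {L : Type*} [Order.Frame L] {ρ θ : L → L → Prop}
    (hθ : IsFrameCongruence θ) (h : ∀ x y, ρ x y → θ x y) {a b : L} :
    frameCongGen ρ a b → θ a b := fun hab => hab θ hθ h

theorem skula_basis {X : Type*} {𝒮 : Set (Set X)} (hS : IsPervin 𝒮) {U : Set X}
    (hU : (TopologicalSpace.generateFrom (𝒮 ∪ {T | ∃ S ∈ 𝒮, T = Sᶜ})).IsOpen U) :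
    ∀ x ∈ U, ∃ S ∈ 𝒮, ∃ T ∈ 𝒮, x ∈ S ∧ x ∉ T ∧ S ∩ Tᶜ ⊆ U := by
  obtain ⟨h0, hu, hcup, hcap⟩ := hS
  induction hU with
  | basic V hV =>
      intro x hx
      rcases hV with hV | ⟨S₀, hS₀, rfl⟩
      · exact ⟨V, hV, ∅, h0, hx, Set.notMem_empty x, by simp⟩
      · exact ⟨Set.univ, hu, S₀, hS₀, trivial, hx, by simp⟩
  | univ => exact fun x _ => ⟨Set.univ, hu, ∅, h0, trivial, Set.notMem_empty x, by simp⟩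
  | inter U V _ _ ihU ihV =>
      intro x hx
      obtain ⟨S₁, hS₁, T₁, hT₁, hxS₁, hxT₁, hsub₁⟩ := ihU x hx.1
      obtain ⟨S₂, hS₂, T₂, hT₂, hxS₂, hxT₂, hsub₂⟩ := ihV x hx.2
      refine ⟨S₁ ∩ S₂, hcap _ hS₁ _ hS₂, T₁ ∪ T₂, hcup _ hT₁ _ hT₂, ⟨hxS₁, hxS₂⟩,
        by simp [hxT₁, hxT₂], ?_⟩
      rintro y ⟨⟨hy1, hy2⟩, hy3⟩
      rw [Set.mem_compl_iff, Set.mem_union] at hy3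
      push_neg at hy3
      exact ⟨hsub₁ ⟨hy1, hy3.1⟩, hsub₂ ⟨hy2, hy3.2⟩⟩
  | sUnion s _ ih =>
      rintro x ⟨V, hVs, hxV⟩
      obtain ⟨S, hS, T, hT, h1, h2, h3⟩ := ih V hVs x hxV
      exact ⟨S, hS, T, hT, h1, h2, h3.trans (Set.subset_sUnion_of_mem hVs)⟩

/-- If no `S ∈ 𝒮` witnesses `T_D` at `x`, then members of `𝒮` agreeing off `x` are equal. -/
theorem eq_of_inter_compl_singleton {X : Type*} {𝒮 : Set (Set X)} {x : X}
    (hnx : ∀ S ∈ 𝒮, x ∈ S → S \ {x} ∉ 𝒮) {A B : Set X} (hA : A ∈ 𝒮) (hB : B ∈ 𝒮)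
    (h : A ∩ {x}ᶜ = B ∩ {x}ᶜ) : A = B := by
  rw [← Set.diff_eq] at h
  rw [← Set.diff_eq] at h
  by_cases hxA : x ∈ A <;> by_cases hxB : x ∈ B
  · ext y
    by_cases hyx : y = x
    · subst hyx; simp [hxA, hxB]
    · constructor
      · intro hy
        exact ((h ▸ (Set.mem_diff y).2 ⟨hy, hyx⟩ : y ∈ B \ {x})).1
      · intro hy
        exact ((h.symm ▸ (Set.mem_diff y).2 ⟨hy, hyx⟩ : y ∈ A \ {x})).1
  · have hAB : A \ {x} = B := h.trans (Set.diff_singleton_eq_self hxB)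
    exact absurd (by rw [hAB]; exact hB) (hnx A hA hxA)
  · have hBA : B \ {x} = A := h.symm.trans (Set.diff_singleton_eq_self hxA)
    exact absurd (by rw [hBA]; exact hA) (hnx B hB hxB)
  · rw [← Set.diff_singleton_eq_self hxA, ← Set.diff_singleton_eq_self hxB, h]

open TopologicalSpace in
/-- For a Pervin space `(X, 𝒮)`, with `θ Y` the frame
congruence on the frame of opens of the topology generated by `𝒮` that is
generated by `{(S₁, S₂) ∈ 𝒮 × 𝒮 | S₁ ∩ Y = S₂ ∩ Y}`, the following are
equivalent: (1) `(X, 𝒮)` is Pervin-`T_D`; (2) `Y ↦ θ Y` is injective;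
(3) for no `x` is `θ (X ∖ {x})` the identity; (4) the Skula topology induced by
`(X, 𝒮)` is discrete. -/
theorem pervin_TD_tfae {X : Type*} (𝒮 : Set (Set X)) (hS : IsPervin 𝒮) :
    letI : TopologicalSpace X := TopologicalSpace.generateFrom 𝒮
    (let θ : Set X → (Opens X → Opens X → Prop) := fun Y =>
      frameCongGen (fun U V : Opens X =>
        (U : Set X) ∈ 𝒮 ∧ (V : Set X) ∈ 𝒮 ∧ (U : Set X) ∩ Y = (V : Set X) ∩ Y)
    List.TFAE
      [ ∀ x : X, ∃ S ∈ 𝒮, x ∈ S ∧ S \ {x} ∈ 𝒮,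
        ∀ Y Z : Set X, θ Y = θ Z → Y = Z,
        ∀ x : X, θ {x}ᶜ ≠ (· = ·),
        ∀ U : Set X, (TopologicalSpace.generateFrom (𝒮 ∪ {T | ∃ S ∈ 𝒮, T = Sᶜ})).IsOpen U ]) := by

  letI inst : TopologicalSpace X := TopologicalSpace.generateFrom 𝒮
  intro θ
  obtain ⟨h0, hu, hcup, hcap⟩ := hS
  have hopen : ∀ S ∈ 𝒮, IsOpen S := fun S hs => TopologicalSpace.GenerateOpen.basic S hs
  tfae_have 1 → 2
  | h1 => by
    have key : ∀ Y Z : Set X, θ Y = θ Z → ∀ x ∈ Y, x ∈ Z := by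
      intro Y Z hYZ x hxY
      by_contra hxZ
      obtain ⟨S, hs, hxS, hS'⟩ := h1 x
      set U : Opens X := ⟨S, hopen S hs⟩ with hU
      set V : Opens X := ⟨S \ {x}, hopen _ hS'⟩ with hV
      have hSZ : (U : Set X) ∩ Z = (V : Set X) ∩ Z := by
        show S ∩ Z = (S \ {x}) ∩ Z
        ext y
        simp only [Set.mem_inter_iff, Set.mem_diff, Set.mem_singleton_iff]
        constructor
        · rintro ⟨hy1, hy2⟩; exact ⟨⟨hy1, fun h => hxZ (h ▸ hy2)⟩, hy2⟩
        · rintro ⟨⟨hy1, _⟩, hy2⟩; exact ⟨hy1, hy2⟩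
      have hθZ : θ Z U V := fun θ' hθ' hcont => hcont U V ⟨hs, hS', hSZ⟩
      have hθY : θ Y U V := hYZ ▸ hθZ
      have := frameCongGen_le (isFrameCongruence_inter Y)
        (fun a b hab => hab.2.2) hθY
      have hxUV : x ∈ (V : Set X) ∩ Y := this ▸ Set.mem_inter hxS hxY
      exact hxUV.1.2 rfl
    exact fun Y Z hYZ => Set.ext fun x => ⟨key Y Z hYZ x, key Z Y hYZ.symm x⟩
  tfae_have 2 → 3
  | h2 => by
    intro x hEq
    have huniv : θ Set.univ = (· = ·) := by
      funext a b
      apply propext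
      constructor
      · exact fun h => frameCongGen_le isFrameCongruence_eq
          (fun U V hUV => TopologicalSpace.Opens.ext (by
            have := hUV.2.2; simpa using this)) h
      · rintro rfl; exact frameCongGen_refl _ a
    have : ({x}ᶜ : Set X) = Set.univ := h2 _ _ (hEq.trans huniv.symm)
    have hx : x ∈ ({x}ᶜ : Set X) := this ▸ Set.mem_univ x
    exact hx rfl
  tfae_have 3 → 1
  | h3 => by
    intro x
    by_contra hnx
    push_neg at hnx
    apply h3 x
    funext a b
    apply propext
    constructor
    · exact fun h => frameCongGen_le isFrameCongruence_eq
        (fun U V hUV => TopologicalSpace.Opens.ext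
          (eq_of_inter_compl_singleton hnx hUV.1 hUV.2.1 hUV.2.2)) h
    · rintro rfl; exact frameCongGen_refl _ a
  tfae_have 1 → 4
  | h1 => by
    intro U
    have hsing : ∀ x : X, TopologicalSpace.GenerateOpen (𝒮 ∪ {T | ∃ S ∈ 𝒮, T = Sᶜ}) {x} := by
      intro x
      obtain ⟨S, hs, hxS, hS'⟩ := h1 x
      have hx : ({x} : Set X) = S ∩ (S \ {x})ᶜ := by
        ext y
        simp only [Set.mem_singleton_iff, Set.mem_inter_iff, Set.mem_compl_iff, Set.mem_diff,
          not_and, not_not]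
        constructor
        · rintro rfl; exact ⟨hxS, fun _ => rfl⟩
        · rintro ⟨hyS, h⟩; exact h hyS
      rw [hx]
      exact .inter _ _ (.basic _ (Or.inl hs)) (.basic _ (Or.inr ⟨_, hS', rfl⟩))
    have hUeq : U = ⋃₀ ((fun x => ({x} : Set X)) '' U) := by
      rw [Set.sUnion_image, Set.biUnion_of_singleton]
    rw [hUeq]
    exact .sUnion _ (by rintro V ⟨y, _, rfl⟩; exact hsing y)
  tfae_have 4 → 1
  | h4 => by
    intro x
    obtain ⟨S, hs, T, hT, hxS, hxT, hsub⟩ :=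
      skula_basis ⟨h0, hu, hcup, hcap⟩ (h4 {x}) x rfl
    refine ⟨S, hs, hxS, ?_⟩
    have hST : S ∩ Tᶜ = {x} := Set.Subset.antisymm hsub (by
      rintro y rfl; exact ⟨hxS, hxT⟩)
    have : S \ {x} = S ∩ T := by
      ext y
      simp only [Set.mem_diff, Set.mem_singleton_iff, Set.mem_inter_iff]
      constructor
      · rintro ⟨hyS, hyx⟩
        refine ⟨hyS, ?_⟩
        by_contra hyT
        exact hyx (hST.subset ⟨hyS, hyT⟩)
      · rintro ⟨hyS, hyT⟩
        exact ⟨hyS, fun h => hxT (h ▸ hyT)⟩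
    rw [this]
    exact hcap S hs T hT
  tfae_finish
end

section
/- Let (X, 𝒮) be a Pervin space, Ω_𝒮(X) the topology on X generated by 𝒮 (a frame under inclusion), x ∈ X, and let θ_{X∖{x}} be the frame congruence on Ω_𝒮(X) generated by the relation {(S₁, S₂) ∈ 𝒮 × 𝒮 | S₁ ∖ {x} = S₂ ∖ {x}}. If θ_{X∖{x}} is not the identity relation on Ω_𝒮(X), then there exist S₁, S₂ ∈ 𝒮 with {x} = S₁ ∖ S₂. -/
open TopologicalSpace in
/-- Let `(X, 𝒮)` be a Pervin space, `x ∈ X`, and let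
`θ_{X∖{x}}` be the frame congruence on the frame of opens of the topology
generated by `𝒮` that is generated by
`{(S₁, S₂) ∈ 𝒮 × 𝒮 | S₁ ∖ {x} = S₂ ∖ {x}}`. If this congruence is not the
identity relation, then there are `S₁, S₂ ∈ 𝒮` with `{x} = S₁ ∖ S₂`. -/
theorem pervin_singleton_of_nontrivial_cong {X : Type*} (𝒮 : Set (Set X))
    (hS : IsPervin 𝒮) (x : X) :
    letI : TopologicalSpace X := TopologicalSpace.generateFrom 𝒮
    (frameCongGen (fun U V : Opens X =>
        (U : Set X) ∈ 𝒮 ∧ (V : Set X) ∈ 𝒮 ∧ (U : Set X) \ {x} = (V : Set X) \ {x})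
        ≠ (· = ·)) →
      ∃ S₁ ∈ 𝒮, ∃ S₂ ∈ 𝒮, {x} = S₁ \ S₂ := by
  letI : TopologicalSpace X := TopologicalSpace.generateFrom 𝒮
  intro hne
  -- The identity relation is a frame congruence.
  have hid : IsFrameCongruence (L := Opens X) (· = ·) := by
    refine ⟨⟨fun _ => rfl, fun h => h.symm, fun h h' => h.trans h'⟩,
      fun a b c d h h' => by rw [h, h'], fun s hs => ?_⟩
    have : Prod.fst '' s = Prod.snd '' s := Set.image_congr hs
    rw [this]
  -- If ρ implied equality, the generated congruence would be the identity.
  by_contra hno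
  apply hne
  funext a b
  ext
  constructor
  · intro h
    refine h _ hid (fun U V ⟨hU, hV, hUV⟩ => ?_)
    -- Show U = V from U \ {x} = V \ {x}, given no pair in 𝒮 has difference {x}.
    have hx : (x ∈ (U : Set X)) ↔ (x ∈ (V : Set X)) := by
      constructor
      · intro hxU
        by_contra hxV
        exact hno ⟨U, hU, V, hV, by
          apply Set.eq_of_subset_of_subset
          · intro y hy; simp at hy; subst hy; exact ⟨hxU, hxV⟩
          · intro y ⟨hyU, hyV⟩
            by_contra hyx
            exact hyV (((Set.ext_iff.mp hUV y).mp ⟨hyU, hyx⟩).1)⟩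
      · intro hxV
        by_contra hxU
        exact hno ⟨V, hV, U, hU, by
          apply Set.eq_of_subset_of_subset
          · intro y hy; simp at hy; subst hy; exact ⟨hxV, hxU⟩
          · intro y ⟨hyV, hyU⟩
            by_contra hyx
            exact hyU (((Set.ext_iff.mp hUV y).mpr ⟨hyV, hyx⟩).1)⟩
    have : (U : Set X) = V := by
      ext y
      by_cases hy : y = x
      · subst hy; exact hx
      · constructor
        · intro h; exact ((Set.ext_iff.mp hUV y).mp ⟨h, hy⟩).1
        · intro h; exact ((Set.ext_iff.mp hUV y).mpr ⟨h, hy⟩).1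
    exact SetLike.coe_injective this
  · rintro rfl
    intro θ hθ _
    exact hθ.1.refl a
end

section
/- Let K be a frame, let r ∈ K be complemented with complement r*, and let r₁, …, rₙ ∈ K be complemented with complements r₁*, …, rₙ*. Suppose that for all a, b ∈ K, if for every i ∈ {1,…,n} one has a ≤ rᵢ or b ≤ rᵢ*, then a ≤ r or b ≤ r*. Then r belongs to the bounded sublattice of K generated by {r₁, …, rₙ} (the smallest subset containing r₁,…,rₙ, ⊥ and ⊤ and closed under binary meets and binary joins). -/
/-- The bounded sublattice of `L` generated by `R`: the smallest subset of `L`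
containing `R`, `⊥` and `⊤` and closed under binary meets and binary joins. -/
def boundedSublatticeGen {L : Type*} [Lattice L] [BoundedOrder L] (R : Set L) : Set L :=
  ⋂₀ {S : Set L | R ⊆ S ∧ ⊥ ∈ S ∧ ⊤ ∈ S ∧
    (∀ a ∈ S, ∀ b ∈ S, a ⊓ b ∈ S) ∧ (∀ a ∈ S, ∀ b ∈ S, a ⊔ b ∈ S)}

private lemma aux_inf_sup_le {K : Type*} [Order.Frame K] {n : ℕ} (f fc : Fin n → K)
    (s : Finset (Fin n)) :
    s.inf (fun i => f i ⊔ fc i) ≤ s.powerset.sup (fun A => A.inf f ⊓ (s \ A).inf fc) := by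
  classical
  induction s using Finset.induction with
  | empty => simp
  | @insert i s hi ih =>
    rw [Finset.inf_insert]
    calc (f i ⊔ fc i) ⊓ s.inf (fun j => f j ⊔ fc j)
        ≤ (f i ⊔ fc i) ⊓ s.powerset.sup (fun A => A.inf f ⊓ (s \ A).inf fc) :=
          inf_le_inf_left _ ih
      _ = f i ⊓ s.powerset.sup (fun A => A.inf f ⊓ (s \ A).inf fc)
          ⊔ fc i ⊓ s.powerset.sup (fun A => A.inf f ⊓ (s \ A).inf fc) := inf_sup_right _ _ _
      _ ≤ (insert i s).powerset.sup (fun A => A.inf f ⊓ ((insert i s) \ A).inf fc) := by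
          apply sup_le
          · rw [Finset.sup_inf_distrib_left]
            apply Finset.sup_le
            intro A hA
            rw [Finset.mem_powerset] at hA
            have hmem : insert i A ∈ (insert i s).powerset := by
              rw [Finset.mem_powerset]; exact Finset.insert_subset_insert _ hA
            refine le_trans ?_ (Finset.le_sup hmem)
            have h1 : (insert i A).inf f = f i ⊓ A.inf f := Finset.inf_insert
            have h2 : (insert i s) \ (insert i A) = s \ A := by
              ext x; by_cases hx : x = i <;> simp [hx, hi]
            rw [h1, h2, inf_assoc]
          · rw [Finset.sup_inf_distrib_left]
            apply Finset.sup_le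
            intro A hA
            rw [Finset.mem_powerset] at hA
            have hmem : A ∈ (insert i s).powerset := by
              rw [Finset.mem_powerset]; exact hA.trans (Finset.subset_insert _ _)
            refine le_trans ?_ (Finset.le_sup hmem)
            have h2 : (insert i s) \ A = insert i (s \ A) := by
              rw [Finset.insert_sdiff_of_notMem _ (fun hiA => hi (hA hiA))]
            rw [h2, Finset.inf_insert]
            rw [inf_left_comm]
      
/-- Let `K` be a frame, `r` complemented with complement
`rc`, and `r₁, …, rₙ` complemented with complements `rc₁, …, rcₙ`. If
`⋂ᵢ E_{rᵢ} ⊆ E_r`, i.e. for all `a b`, `(∀ i, a ≤ rᵢ ∨ b ≤ rcᵢ)` implies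
`a ≤ r ∨ b ≤ rc`, then `r` lies in the bounded sublattice of `K` generated by
`{r₁, …, rₙ}`. -/
theorem mem_boundedSublatticeGen_of_entourage_le {K : Type*} [Order.Frame K]
    (n : ℕ) (r rc : K) (hr : IsCompl r rc)
    (f fc : Fin n → K) (hf : ∀ i, IsCompl (f i) (fc i))
    (h : ∀ a b : K, (∀ i, a ≤ f i ∨ b ≤ fc i) → a ≤ r ∨ b ≤ rc) :
    r ∈ boundedSublatticeGen (Set.range f) := by
  classical
  set T : Finset (Finset (Fin n)) :=
    (Finset.univ : Finset (Fin n)).powerset.filter (fun A => A.inf f ≤ r) with hT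
  have key : r = T.sup (fun A => A.inf f) := by
    apply le_antisymm
    · -- r ≤ sup
      have htop : (⊤ : K) ≤ (Finset.univ : Finset (Fin n)).powerset.sup
          (fun A => A.inf f ⊓ ((Finset.univ : Finset (Fin n)) \ A).inf fc) := by
        have := aux_inf_sup_le f fc (Finset.univ : Finset (Fin n))
        refine le_trans ?_ this
        rw [Finset.le_inf_iff]
        intro i _
        exact le_of_eq (hf i).sup_eq_top.symm
      calc r = r ⊓ ⊤ := (inf_top_eq r).symm
        _ ≤ r ⊓ (Finset.univ : Finset (Fin n)).powerset.sup
              (fun A => A.inf f ⊓ ((Finset.univ : Finset (Fin n)) \ A).inf fc) :=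
            inf_le_inf_left _ htop
        _ ≤ T.sup (fun A => A.inf f) := by
            rw [Finset.sup_inf_distrib_left]
            apply Finset.sup_le
            intro A hA
            have hE : ∀ i, A.inf f ≤ f i ∨ (Finset.univ \ A).inf fc ≤ fc i := by
              intro i
              by_cases hiA : i ∈ A
              · exact Or.inl (Finset.inf_le hiA)
              · exact Or.inr (Finset.inf_le (by simp [hiA]))
            rcases h (A.inf f) ((Finset.univ \ A).inf fc) hE with hle | hle
            · have hmem' : A ∈ T := by rw [hT, Finset.mem_filter]; exact ⟨hA, hle⟩
              exact le_trans (le_trans inf_le_right inf_le_left)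
                (Finset.le_sup (f := fun B => B.inf f) hmem')
            · have : r ⊓ (A.inf f ⊓ (Finset.univ \ A).inf fc) ≤ r ⊓ rc :=
                inf_le_inf le_rfl (le_trans inf_le_right hle)
              rw [hr.inf_eq_bot] at this
              exact le_trans this bot_le
    · -- sup ≤ r
      apply Finset.sup_le
      intro A hA
      rw [hT, Finset.mem_filter] at hA
      exact hA.2
  intro S hS
  obtain ⟨hR, hbot, htop, hinf, hsup⟩ := hS
  rw [key]
  apply Finset.sup_induction hbot (fun a ha b hb => hsup a ha b hb)
  intro A _
  apply Finset.inf_induction htop (fun a ha b hb => hinf a ha b hb)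
  intro i _
  exact hR ⟨i, rfl⟩
end

section
/- Let K be a frame, R ⊆ K a set of complemented elements, and x, a ∈ K. Suppose there exist r₁, …, rₙ ∈ R, with complements r₁*, …, rₙ*, such that for all u, c ∈ K with c ≠ ⊥, c ≤ x, and (u ≤ rᵢ or c ≤ rᵢ* for every i ∈ {1,…,n}), one has u ≤ a. Then there exists an element r in the bounded sublattice of K generated by R (the smallest subset of K containing R, ⊥ and ⊤ and closed under binary meets and binary joins) such that x ≤ r ≤ a. -/
/-- Let `K` be a frame, `R ⊆ K` a set of complemented
elements, and `x, a ∈ K`. Suppose there are `r₁, …, rₙ ∈ R` with complements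
`rc₁, …, rcₙ` such that for all `u, c ∈ K` with `c ≠ ⊥`, `c ≤ x` and
`(∀ i, u ≤ rᵢ ∨ c ≤ rcᵢ)`, one has `u ≤ a` (i.e. `x ◁₁ a`). Then there is an
element `t` of the bounded sublattice generated by `R` with `x ≤ t ≤ a`. -/
theorem exists_mem_boundedSublatticeGen_between {K : Type*} [Order.Frame K]
    (R : Set K) (hR : ∀ r ∈ R, ∃ rc : K, IsCompl r rc) (x a : K)
    (h : ∃ (n : ℕ) (r rc : Fin n → K), (∀ i, r i ∈ R) ∧ (∀ i, IsCompl (r i) (rc i)) ∧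
      ∀ u c : K, c ≠ ⊥ → c ≤ x → (∀ i, u ≤ r i ∨ c ≤ rc i) → u ≤ a) :
    ∃ t ∈ boundedSublatticeGen R, x ≤ t ∧ t ≤ a := by
  clear hR
  obtain ⟨n, r, rc, hrR, hcompl, h⟩ := h
  have bot_mem : (⊥ : K) ∈ boundedSublatticeGen R := fun S hS => hS.2.1
  have top_mem : (⊤ : K) ∈ boundedSublatticeGen R := fun S hS => hS.2.2.1
  have R_sub : R ⊆ boundedSublatticeGen R := fun y hy S hS => hS.1 hy
  have inf_mem : ∀ y ∈ boundedSublatticeGen R, ∀ z ∈ boundedSublatticeGen R,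
      y ⊓ z ∈ boundedSublatticeGen R :=
    fun y hy z hz S hS => hS.2.2.2.1 y (hy S hS) z (hz S hS)
  have sup_mem : ∀ y ∈ boundedSublatticeGen R, ∀ z ∈ boundedSublatticeGen R,
      y ⊔ z ∈ boundedSublatticeGen R :=
    fun y hy z hz S hS => hS.2.2.2.2 y (hy S hS) z (hz S hS)
  induction n generalizing x a with
  | zero =>
    by_cases hx : x = ⊥
    · exact ⟨⊥, bot_mem, hx.le, bot_le⟩
    · refine ⟨⊤, top_mem, le_top, ?_⟩
      exact h ⊤ x hx le_rfl (fun i => i.elim0)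
  | succ n ih =>
    -- first application: x' = x ⊓ rc (last), a' = a
    obtain ⟨t₁, ht₁mem, ht₁x, ht₁a⟩ :=
      ih (x ⊓ rc (Fin.last n)) a (fun i => r i.castSucc) (fun i => rc i.castSucc)
        (fun i => hrR _) (fun i => hcompl _)
        (fun u c hc hcx hi =>
          h u c hc (hcx.trans inf_le_left)
            (Fin.lastCases (Or.inr (hcx.trans inf_le_right)) hi))
    -- second application: x' = x, a' = r (last) ⇨ a
    obtain ⟨t₂, ht₂mem, ht₂x, ht₂a⟩ :=
      ih x (r (Fin.last n) ⇨ a) (fun i => r i.castSucc) (fun i => rc i.castSucc)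
        (fun i => hrR _) (fun i => hcompl _)
        (fun u c hc hcx hi => by
          rw [le_himp_iff]
          refine h (u ⊓ r (Fin.last n)) c hc hcx ?_
          refine Fin.lastCases (Or.inl inf_le_right) (fun i => ?_)
          rcases hi i with h' | h'
          · exact Or.inl ((inf_le_left).trans h')
          · exact Or.inr h')
    refine ⟨t₁ ⊔ t₂ ⊓ r (Fin.last n),
      sup_mem _ ht₁mem _ (inf_mem _ ht₂mem _ (R_sub (hrR _))), ?_, ?_⟩
    · have : x = x ⊓ (r (Fin.last n) ⊔ rc (Fin.last n)) := by
        rw [(hcompl (Fin.last n)).sup_eq_top, inf_top_eq]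
      rw [this, inf_sup_left]
      exact sup_le (le_sup_of_le_right (inf_le_inf_right _ ht₂x))
        (le_sup_of_le_left ht₁x) |>.trans (by rw [sup_comm])
    · exact sup_le ht₁a (by rw [← le_himp_iff] at *; exact ht₂a.trans le_rfl)
end

section
/- Let L and M be frames, let B ⊆ L and C ⊆ M be join-dense bounded sublattices such that every element of B is complemented in L with its complement in B, and every element of C is complemented in M with its complement in C (i.e., (L,B) and (M,C) are symmetric Frith frames). Let h : L → M be a frame homomorphism that is dense (h(a) = ⊥ implies a = ⊥) and satisfies h[B] = C. Then the restriction of h to B is injective, and hence h restricts to a lattice isomorphism from B onto C. -/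
/-- Let `(L, B)` and `(M, C)` be symmetric Frith frames (the
elements of `B`, resp. `C`, are complemented with complements in `B`, resp.
`C`). Any dense frame homomorphism `h : L → M` with `h[B] = C` is injective on
`B`, and hence restricts to a lattice (order) isomorphism from `B` onto `C`. -/
theorem symmetric_frith_dense_restricts_iso {L M : Type*} [Order.Frame L] [Order.Frame M]
    (B : Set L) (C : Set M) (hB : IsFrith B) (hC : IsFrith C)
    (hBc : ∀ b ∈ B, ∃ b' ∈ B, IsCompl b b')
    (hCc : ∀ c ∈ C, ∃ c' ∈ C, IsCompl c c')
    (h : FrameHom L M) (hdense : ∀ a : L, h a = ⊥ → a = ⊥)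
    (himg : (⇑h) '' B = C) :
    Set.InjOn h B ∧ ∃ e : B ≃o C, ∀ b : B, (e b : M) = h b := by
  have key : ∀ b ∈ B, ∀ b' ∈ B, h b ≤ h b' → b ≤ b' := by
    intro b hb b' hb' hle
    obtain ⟨c, hcB, hcompl⟩ := hBc b' hb'
    have hbot : b ⊓ c = ⊥ := by
      apply hdense
      have h1 : h (b ⊓ c) ≤ h (b' ⊓ c) := by
        rw [map_inf, map_inf]
        exact inf_le_inf_right _ hle
      rw [hcompl.inf_eq_bot, map_bot] at h1
      exact le_bot_iff.mp h1
    calc b = b ⊓ (b' ⊔ c) := by rw [hcompl.sup_eq_top, inf_top_eq]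
    _ = (b ⊓ b') ⊔ (b ⊓ c) := inf_sup_left _ _ _
    _ = b ⊓ b' := by rw [hbot, sup_bot_eq]
    _ ≤ b' := inf_le_right
  have hinj : Set.InjOn h B := fun b hb b' hb' heq =>
    le_antisymm (key b hb b' hb' heq.le) (key b' hb' b hb heq.ge)
  refine ⟨hinj, ?_⟩
  have hmem : ∀ b : B, h b ∈ C := fun b => himg ▸ ⟨b, b.2, rfl⟩
  let f : B → C := fun b => ⟨h b, hmem b⟩
  have hbij : Function.Bijective f := by
    constructor
    · intro a b hab
      exact Subtype.ext (hinj a.2 b.2 (congrArg Subtype.val hab))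
    · rintro ⟨c, hc⟩
      rw [← himg] at hc
      obtain ⟨b, hb, rfl⟩ := hc
      exact ⟨⟨b, hb⟩, rfl⟩
  refine ⟨{ toEquiv := Equiv.ofBijective f hbij, map_rel_iff' := ?_ }, fun b => rfl⟩
  intro a b
  constructor
  · exact fun hle => key a a.2 b b.2 hle
  · exact fun hle => OrderHomClass.mono h hle
end

section
/- Let (L, S) be a Frith frame. Then every element of S is compact in L if and only if for every frame M, every Cauchy map φ : (L, S) → M is a frame homomorphism (i.e., preserves finite meets and arbitrary suprema). -/
universe u

/-- A Cauchy map `φ : (L, S) → M`: (C1) the restriction of `φ` to `S` is a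
bounded lattice homomorphism; (C2) `φ a = ⨆ {φ s | s ∈ S, s ≤ a}` for every
`a`; (C3) `φ s` is complemented in `M` for every `s ∈ S`. -/
def IsCauchyMap {L : Type*} {M : Type*} [Order.Frame L] [Order.Frame M]
    (S : Set L) (φ : L → M) : Prop :=
  (φ ⊥ = ⊥ ∧ φ ⊤ = ⊤ ∧
    ∀ s ∈ S, ∀ t ∈ S, φ (s ⊓ t) = φ s ⊓ φ t ∧ φ (s ⊔ t) = φ s ⊔ φ t) ∧
  (∀ a : L, φ a = sSup (φ '' {s | s ∈ S ∧ s ≤ a})) ∧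
  (∀ s ∈ S, ∃ c : M, IsCompl (φ s) c)

namespace IsFrith

variable {L : Type*} [Order.Frame L] {S : Set L}

theorem bot_mem (hS : IsFrith S) : ⊥ ∈ S := hS.1

theorem top_mem (hS : IsFrith S) : ⊤ ∈ S := hS.2.1

theorem infClosed (hS : IsFrith S) : InfClosed S := fun _ ha _ hb => hS.2.2.1 _ ha _ hb

theorem supClosed (hS : IsFrith S) : SupClosed S := fun _ ha _ hb => hS.2.2.2.1 _ ha _ hb

theorem finsetSup_mem (hS : IsFrith S) {F : Finset L} (hF : ↑F ⊆ S) : F.sup id ∈ S :=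
  Finset.sup_induction hS.bot_mem (fun _ ha _ hb => hS.supClosed ha hb) hF

theorem sSup_le_sSup_inter_lowerClosure (hS : IsFrith S) (A : Set L) :
    sSup A ≤ sSup (S ∩ lowerClosure A) := by
  refine sSup_le fun a ha => ?_
  obtain ⟨u, huS, rfl⟩ := hS.2.2.2.2 a
  exact sSup_le_sSup fun t ht => ⟨huS ht, mem_lowerClosure.2 ⟨_, ha, le_sSup ht⟩⟩

def sublattice (hS : IsFrith S) : Sublattice L := ⟨S, hS.supClosed, hS.infClosed⟩

abbrev boundedOrder (hS : IsFrith S) : BoundedOrder hS.sublattice :=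
  Subtype.boundedOrder hS.bot_mem hS.top_mem

def finitelyCoveredIdeal (hS : IsFrith S) (A : Set L) : Order.Ideal hS.sublattice where
  carrier := {s | ∃ F : Finset L, ↑F ⊆ A ∧ (s : L) ≤ F.sup id}
  lower' := fun _ _ hts ⟨F, hFA, hsF⟩ => ⟨F, hFA, le_trans hts hsF⟩
  nonempty' := ⟨⟨⊥, hS.bot_mem⟩, ∅, by simp, bot_le⟩
  directed' := by
    classical
    rintro s ⟨F₁, hF₁, hs⟩ t ⟨F₂, hF₂, ht⟩
    refine ⟨s ⊔ t, ⟨F₁ ∪ F₂, ?_, ?_⟩, le_sup_left, le_sup_right⟩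
    · rw [Finset.coe_union]
      exact Set.union_subset hF₁ hF₂
    · rw [Finset.sup_union]
      exact sup_le_sup hs ht

theorem exists_isPrime_ideal (hS : IsFrith S) {s : L} (hs : s ∈ S) {A : Set L}
    (hA : ∀ F : Finset L, ↑F ⊆ A → ¬s ≤ F.sup id) :
    ∃ J : Order.Ideal hS.sublattice, J.IsPrime ∧ ⟨s, hs⟩ ∉ J ∧
      ∀ t : hS.sublattice, (t : L) ∈ lowerClosure A → t ∈ J := by
  have hdisj : Disjoint (Order.PFilter.principal (⟨s, hs⟩ : hS.sublattice) : Set hS.sublattice)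
      (hS.finitelyCoveredIdeal A : Set hS.sublattice) :=
    Set.disjoint_left.2 fun t hst ⟨F, hFA, htF⟩ => hA F hFA (le_trans hst htF)
  obtain ⟨J, hJ, hDJ, hJdisj⟩ := DistribLattice.prime_ideal_of_disjoint_filter_ideal hdisj
  refine ⟨J, hJ, Set.disjoint_left.1 hJdisj le_rfl, fun t ht => hDJ ?_⟩
  obtain ⟨a, ha, hta⟩ := mem_lowerClosure.1 ht
  exact ⟨{a}, by simpa using ha, by simpa using hta⟩

variable {hS : IsFrith S}

/-- The point of `(L, S)` given by the prime filter `S \ J`; its values are `∅` and `univ`. -/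
def cauchyMapOfIdeal (α : Type*) (J : Order.Ideal hS.sublattice) : L → Set α :=
  fun a => {_x | ∃ s : hS.sublattice, (s : L) ≤ a ∧ s ∉ J}

theorem cauchyMapOfIdeal_coe (α : Type*) (J : Order.Ideal hS.sublattice) (s : hS.sublattice) :
    cauchyMapOfIdeal α J s = {_x | s ∉ J} := by
  ext
  exact ⟨fun ⟨t, hts, htJ⟩ hsJ => htJ (J.lower hts hsJ), fun hsJ => ⟨s, le_rfl, hsJ⟩⟩

theorem isCauchyMap_cauchyMapOfIdeal (α : Type*) (J : Order.Ideal hS.sublattice) [hJ : J.IsPrime] :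
    IsCauchyMap S (cauchyMapOfIdeal α J) := by
  let := hS.boundedOrder
  have hinf (s t : hS.sublattice) : cauchyMapOfIdeal α J ↑(s ⊓ t) =
      cauchyMapOfIdeal α J s ⊓ cauchyMapOfIdeal α J t := by
    simp only [cauchyMapOfIdeal_coe]
    ext
    simp only [Set.mem_ofPred_eq, Set.inf_eq_inter, Set.mem_inter_iff]
    exact ⟨fun h => ⟨fun hs => h (J.lower inf_le_left hs), fun ht => h (J.lower inf_le_right ht)⟩,
      fun ⟨hs, ht⟩ hst => (hJ.mem_or_mem hst).elim hs ht⟩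
  have hsup (s t : hS.sublattice) : cauchyMapOfIdeal α J ↑(s ⊔ t) =
      cauchyMapOfIdeal α J s ⊔ cauchyMapOfIdeal α J t := by
    simp only [cauchyMapOfIdeal_coe]
    ext
    simp only [Set.mem_ofPred_eq, Set.sup_eq_union, Set.mem_union, Order.Ideal.sup_mem_iff]
    tauto
  refine ⟨⟨?_, ?_, fun s hs t ht => ⟨hinf ⟨s, hs⟩ ⟨t, ht⟩, hsup ⟨s, hs⟩ ⟨t, ht⟩⟩⟩, fun a => ?_,
    fun s _ => ⟨_, isCompl_compl⟩⟩
  · exact (cauchyMapOfIdeal_coe α J ⊥).trans (by simp)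
  · exact (cauchyMapOfIdeal_coe α J ⊤).trans (by simp [hJ.top_notMem])
  · ext x
    rw [Set.sSup_eq_sUnion]
    constructor
    · rintro ⟨s, hsa, hsJ⟩
      exact ⟨_, ⟨s, ⟨s.2, hsa⟩, rfl⟩, s, le_rfl, hsJ⟩
    · rintro ⟨_, ⟨s, ⟨-, hsa⟩, rfl⟩, t, hts, htJ⟩
      exact ⟨t, hts.trans hsa, htJ⟩

theorem isCompactElement_of_forall_isCauchyMap (hS : IsFrith S) (α : Type*) [Nonempty α]
    (h : ∀ φ : L → Set α, IsCauchyMap S φ → ∀ A, φ (sSup A) = sSup (φ '' A))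
    {s : L} (hs : s ∈ S) : IsCompactElement s := by
  rw [CompleteLattice.isCompactElement_iff_exists_le_sSup_of_le_sSup]
  intro A hsA
  by_contra! hA
  obtain ⟨J, hJ, hsJ, hAJ⟩ := hS.exists_isPrime_ideal hs hA
  obtain ⟨x⟩ := ‹Nonempty α›
  have hx : x ∈ cauchyMapOfIdeal α J (sSup A) := ⟨⟨s, hs⟩, hsA, hsJ⟩
  rw [h _ (isCauchyMap_cauchyMapOfIdeal α J) A] at hx
  obtain ⟨_, ⟨a, ha, rfl⟩, t, hta, htJ⟩ := hx
  exact htJ (hAJ t (mem_lowerClosure.2 ⟨a, ha, hta⟩))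

end IsFrith

namespace IsCauchyMap

variable {L M : Type*} [Order.Frame L] [Order.Frame M] {S : Set L} {φ : L → M}

theorem map_top (hφ : IsCauchyMap S φ) : φ ⊤ = ⊤ := hφ.1.2.1

theorem eq_sSup (hφ : IsCauchyMap S φ) (a : L) : φ a = sSup (φ '' {s | s ∈ S ∧ s ≤ a}) :=
  hφ.2.1 a

theorem monotone (hφ : IsCauchyMap S φ) : Monotone φ := fun a b hab => by
  rw [hφ.eq_sSup a, hφ.eq_sSup b]
  exact sSup_le_sSup (Set.image_mono fun s hs => ⟨hs.1, hs.2.trans hab⟩)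

theorem map_finsetSup (hφ : IsCauchyMap S φ) (hS : IsFrith S) {F : Finset L} (hF : ↑F ⊆ S) :
    φ (F.sup id) = F.sup φ := by
  induction F using Finset.cons_induction with
  | empty => exact hφ.1.1
  | cons x F hx ih =>
    rw [Finset.coe_cons, Set.insert_subset_iff] at hF
    rw [Finset.sup_cons, Finset.sup_cons, id, (hφ.1.2.2 x hF.1 _ (hS.finsetSup_mem hF.2)).2,
      ih hF.2]

theorem map_inf (hφ : IsCauchyMap S φ) (a b : L) :
    φ (a ⊓ b) = φ a ⊓ φ b := by
  refine le_antisymm (le_inf (hφ.monotone inf_le_left) (hφ.monotone inf_le_right)) ?_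
  rw [hφ.eq_sSup a, hφ.eq_sSup b, sSup_inf_sSup]
  refine iSup₂_le fun _ ⟨⟨s, ⟨hsS, hsa⟩, hs⟩, ⟨t, ⟨htS, htb⟩, ht⟩⟩ => ?_
  rw [← hs, ← ht, ← (hφ.1.2.2 s hsS t htS).1]
  exact hφ.monotone (inf_le_inf hsa htb)

theorem map_sSup_of_isCompactElement (hφ : IsCauchyMap S φ) (hS : IsFrith S)
    (hc : ∀ s ∈ S, IsCompactElement s) (A : Set L) : φ (sSup A) = sSup (φ '' A) := by
  refine le_antisymm ?_ (sSup_le (Set.forall_mem_image.2 fun a ha => hφ.monotone (le_sSup ha)))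
  rw [hφ.eq_sSup (sSup A)]
  refine sSup_le (Set.forall_mem_image.2 fun s ⟨hsS, hsA⟩ => ?_)
  obtain ⟨F, hFA, hsF⟩ := (CompleteLattice.isCompactElement_iff_exists_le_sSup_of_le_sSup _ s).1 (hc s hsS) _
    (hsA.trans (hS.sSup_le_sSup_inter_lowerClosure A))
  calc φ s ≤ φ (F.sup id) := hφ.monotone hsF
    _ = F.sup φ := hφ.map_finsetSup hS fun t ht => (hFA ht).1
    _ ≤ sSup (φ '' A) := Finset.sup_le fun t ht => by
        obtain ⟨a, ha, hta⟩ := mem_lowerClosure.1 (hFA ht).2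
        exact (hφ.monotone hta).trans (le_sSup (Set.mem_image_of_mem φ ha))

end IsCauchyMap

/-- A Frith frame `(L, S)` is coherent (every element of `S`
is compact in `L`) if and only if for every frame `M` every Cauchy map
`φ : (L, S) → M` is a frame homomorphism. -/
theorem frith_coherent_iff_cauchy_maps_are_homs {L : Type u} [Order.Frame L]
    (S : Set L) (hS : IsFrith S) :
    (∀ s ∈ S, IsCompactElement s) ↔
      ∀ (M : Type u) [Order.Frame M] (φ : L → M), IsCauchyMap S φ →
        (φ ⊤ = ⊤ ∧ (∀ a b : L, φ (a ⊓ b) = φ a ⊓ φ b) ∧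
          ∀ A : Set L, φ (sSup A) = sSup (φ '' A)) :=
  ⟨fun hc _ _ _ hφ =>
      ⟨hφ.map_top, hφ.map_inf, hφ.map_sSup_of_isCompactElement hS hc⟩,
    fun h _ hs => hS.isCompactElement_of_forall_isCauchyMap PUnit.{u + 1}
      (fun φ hφ => (h _ φ hφ).2.2) hs⟩
end
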